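/- Let (P,Q) ∈ Gr_𝒟 and let Ψ be the unique solution of P·Ψ = 0 with Ψ ∈ 1 + z⁻¹ℂ[[z⁻¹]]. Then: (i) for every k ≥ 0, the series Q^k·Ψ − z^k has degree ≤ k−1 (so {Q^k·Ψ} is a distinguished basis with leading terms z^k); (ii) the subspace W := span_ℂ{Q^k·Ψ : k ≥ 0} belongs to the big cell of the Sato Grassmannian; and (iii) P(W) ⊆ W and Q(W) ⊆ W. -/

import Mathlib

noncomputable section

/-- `H = ℂ((z⁻¹))`: formal Laurent series in `u = z⁻¹`. -/
abbrev H : Type := LaurentSeries ℂ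

/-- The coefficient of `z^k` of a Laurent series in `z⁻¹`. -/
def zc (f : H) (k : ℤ) : ℂ := f.coeff (-k)

/-- `deg_z f ≤ d`: all coefficients of `z^k` with `k > d` vanish. -/
def degLE (f : H) (d : ℤ) : Prop := ∀ k : ℤ, d < k → zc f k = 0

/-- The element `z` of `H`. -/
def zH : H := HahnSeries.single (-1 : ℤ) (1 : ℂ)

/-- Multiplication by `z` as a `ℂ`-linear endomorphism of `H`. -/
def Mz : H →ₗ[ℂ] H where
  toFun f := zH * f
  map_add' f g := mul_add zH f g
  map_smul' c f := by
    simp only [RingHom.id_apply, ← HahnSeries.single_zero_mul_eq_smul]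
    ring

/-- The derivative `d/dz` as a `ℂ`-linear endomorphism of `H`. -/
def Dz : H →ₗ[ℂ] H where
  toFun f :=
    { coeff := fun n => ((1 - n : ℤ) : ℂ) * f.coeff (n - 1)
      isPWO_support' := by
        refine Set.IsPWO.mono (Set.IsPWO.image_of_monotone f.isPWO_support'
          (f := fun m : ℤ => m + 1) (fun a b hab => by dsimp only; omega)) ?_
        intro n hn
        simp only [Function.mem_support] at hn
        refine ⟨n - 1, ?_, by ring⟩
        intro h
        exact hn (by rw [h, mul_zero]) }
  map_add' f g := by
    ext n
    simp [HahnSeries.coeff_add, mul_add]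
  map_smul' c f := by
    ext n
    simp [HahnSeries.coeff_smul]
    ring

/-- `H₊ = ℂ[z]`: series with no negative powers of `z`. -/
def Hplus : Submodule ℂ H where
  carrier := {f | ∀ k : ℤ, k < 0 → zc f k = 0}
  add_mem' := by
    intro f g hf hg k hk
    simp only [Set.mem_setOf_eq, zc, HahnSeries.coeff_add] at *
    rw [hf k hk, hg k hk, add_zero]
  zero_mem' := by intro k hk; simp [zc]
  smul_mem' := by
    intro c f hf k hk
    simp only [Set.mem_setOf_eq, zc, HahnSeries.coeff_smul] at *
    rw [hf k hk, smul_zero]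

/-- `H₋ = z⁻¹ℂ[[z⁻¹]]`: series with only negative powers of `z`. -/
def Hminus : Submodule ℂ H where
  carrier := {f | ∀ k : ℤ, 0 ≤ k → zc f k = 0}
  add_mem' := by
    intro f g hf hg k hk
    simp only [Set.mem_setOf_eq, zc, HahnSeries.coeff_add] at *
    rw [hf k hk, hg k hk, add_zero]
  zero_mem' := by intro k hk; simp [zc]
  smul_mem' := by
    intro c f hf k hk
    simp only [Set.mem_setOf_eq, zc, HahnSeries.coeff_smul] at *
    rw [hf k hk, smul_zero]

/-- The projection `π₊ : H → H₊` discarding all negative powers of `z`. -/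
def piPlus : H →ₗ[ℂ] H where
  toFun f :=
    { coeff := fun n => if 0 < n then 0 else f.coeff n
      isPWO_support' := by
        refine Set.IsPWO.mono f.isPWO_support' ?_
        intro n hn
        simp only [Function.mem_support] at hn
        by_cases h : 0 < n
        · exact absurd (if_pos h) hn
        · rw [if_neg h] at hn; exact hn }
  map_add' f g := by
    ext n
    by_cases h : 0 < n <;> simp [HahnSeries.coeff_add, h]
  map_smul' c f := by
    ext n
    by_cases h : 0 < n <;> simp [HahnSeries.coeff_smul, h]

/-- The statement that `A` is the operator `Σ_{k≥0} a_k (d/dz)^k`, where all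
`deg a_k ≤ e`: partial sums converge to `A f` coefficientwise. -/
def IsOp (a : ℕ → H) (e : ℤ) (A : H →ₗ[ℂ] H) : Prop :=
  (∀ k, degLE (a k) e) ∧
  ∀ (f : H) (d : ℤ), degLE f d → ∀ N : ℕ,
    degLE (A f - ∑ k ∈ Finset.range N, a k * ((Dz ^ k) f)) (d + e - N)

/-- The operator `A` stabilizes the subspace `W`. -/
def Stab (A : H →ₗ[ℂ] H) (W : Submodule ℂ H) : Prop := ∀ f ∈ W, A f ∈ W

/-- The big cell of the Sato Grassmannian: `π₊` restricts to a bijection of `W` onto `ℂ[z]`. -/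
def BigCell (W : Submodule ℂ H) : Prop :=
  Set.BijOn piPlus (W : Set H) (Hplus : Set H)

/-- The pair `(P, Q)` belongs to `Gr_𝒟`. -/
def GrD (P Q : H →ₗ[ℂ] H) : Prop :=
  (∃ a : ℕ → H, IsOp a (-2) (P - Dz)) ∧
  (∃ b : ℕ → H, IsOp b (-1) (Q - Mz)) ∧
  P ∘ₗ Q - Q ∘ₗ P = LinearMap.id

/-!
Write `Ψ_k := Q^k Ψ`. Since `Q = z + (terms of degree ≤ -1)`, multiplying by `Q` raises the
degree by exactly one and keeps the leading coefficient, so by induction `Ψ_k = z^k + O(z^{k-1})`.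
A family with such leading terms is an upper-triangular deformation of the monomial basis of
`ℂ[z]`: reading off top coefficients shows that `π₊` is injective on its span, and peeling off
top coefficients one at a time shows that `π₊` maps the span onto `ℂ[z]`. The span is
`Q`-stable by construction, and `P`-stable because `[P, Q] = 1` and `PΨ = 0` give
`P Ψ_{k+1} = Q (P Ψ_k) + Ψ_k`.
-/

lemma zc_add (f g : H) (k : ℤ) : zc (f + g) k = zc f k + zc g k := rfl

lemma zc_sub (f g : H) (k : ℤ) : zc (f - g) k = zc f k - zc g k := rfl

lemma zc_smul (c : ℂ) (f : H) (k : ℤ) : zc (c • f) k = c * zc f k := rfl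

lemma zc_zero (k : ℤ) : zc (0 : H) k = 0 := rfl

lemma zc_sum {ι : Type*} (s : Finset ι) (g : ι → H) (k : ℤ) :
    zc (∑ i ∈ s, g i) k = ∑ i ∈ s, zc (g i) k :=
  HahnSeries.coeff_sum ..

lemma zc_zH_mul (f : H) (k : ℤ) : zc (zH * f) k = zc f (k - 1) := by
  rw [zc, zH, show -k = -(k - 1) + -1 by ring, HahnSeries.coeff_single_mul_add, one_mul, zc]

lemma zH_pow (k : ℕ) : zH ^ k = HahnSeries.single (-(k : ℤ)) (1 : ℂ) := by
  simp [zH, HahnSeries.single_pow]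

lemma zc_zH_pow (k : ℕ) (j : ℤ) : zc (zH ^ k) j = if j = k then 1 else 0 := by
  simp only [zH_pow, zc, HahnSeries.coeff_single, neg_inj]

lemma zc_piPlus (f : H) (k : ℤ) : zc (piPlus f) k = if k < 0 then 0 else zc f k := by
  change (if (0 : ℤ) < -k then 0 else f.coeff (-k)) = _
  simp only [Left.neg_pos_iff, zc]

lemma piPlus_mem_Hplus (f : H) : piPlus f ∈ Hplus := by
  intro k hk
  rw [zc_piPlus, if_pos hk]

lemma mem_Hminus_iff_degLE {f : H} : f ∈ Hminus ↔ degLE f (-1) :=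
  forall_congr' fun k => by rw [Int.lt_iff_add_one_le, neg_add_cancel]

namespace degLE

variable {f g : H} {d : ℤ}

lemma mono {d' : ℤ} (h : degLE f d) (hd : d ≤ d') : degLE f d' :=
  fun k hk => h k (hd.trans_lt hk)

lemma add (hf : degLE f d) (hg : degLE g d) : degLE (f + g) d := by
  intro k hk
  rw [zc_add, hf k hk, hg k hk, add_zero]

lemma zH_mul (hf : degLE f d) : degLE (zH * f) (d + 1) := by
  intro k hk
  rw [zc_zH_mul]
  exact hf _ (by omega)

end degLE

lemma degLE_zH_pow (k : ℕ) : degLE (zH ^ k) k := by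
  intro j hj
  rw [zc_zH_pow, if_neg hj.ne']

lemma degLE_neg_order (f : H) : degLE f (-f.order) :=
  fun _ hk => HahnSeries.coeff_eq_zero_of_lt_order (by omega)

lemma eq_zero_of_mem_Hplus_of_degLE {p : H} (hp : p ∈ Hplus) (hdeg : degLE p (-1)) : p = 0 := by
  ext n
  have h : zc p (-n) = 0 := by
    rcases lt_or_ge (-n) 0 with hn | hn
    · exact hp _ hn
    · exact hdeg _ (by omega)
  simpa [zc] using h

section LeadingTerm

variable {f : H} {k : ℕ} (hf : degLE (f - zH ^ k) (k - 1))
include hf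

lemma degLE_of_degLE_sub_zH_pow : degLE f k := by
  simpa using (hf.mono (by omega)).add (degLE_zH_pow k)

lemma zc_eq_one_of_degLE_sub_zH_pow : zc f k = 1 := by
  have h := hf k (by omega)
  rwa [zc_sub, zc_zH_pow, if_pos rfl, sub_eq_zero] at h

end LeadingTerm

lemma IsOp.degLE_apply {a : ℕ → H} {e : ℤ} {A : H →ₗ[ℂ] H} (hA : IsOp a e A) {f : H} {d : ℤ}
    (hf : degLE f d) : degLE (A f) (d + e) := by
  simpa using hA.2 f d hf 0

lemma IsOp.degLE_apply_sub_zH_pow_succ {b : ℕ → H} {Q : H →ₗ[ℂ] H} (hQ : IsOp b (-1) (Q - Mz))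
    {f : H} {k : ℕ} (hf : degLE (f - zH ^ k) (k - 1)) : degLE (Q f - zH ^ (k + 1)) k := by
  have hsplit : Q f - zH ^ (k + 1) = zH * (f - zH ^ k) + (Q - Mz) f := by
    rw [LinearMap.sub_apply, show Mz f = zH * f from rfl, pow_succ']
    ring
  rw [hsplit]
  exact (hf.zH_mul.mono (by omega)).add
    ((hQ.degLE_apply (degLE_of_degLE_sub_zH_pow hf)).mono (by omega))

lemma IsOp.degLE_pow_apply_sub_zH_pow {b : ℕ → H} {Q : H →ₗ[ℂ] H} (hQ : IsOp b (-1) (Q - Mz))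
    {ψ : H} (hψ : ψ - 1 ∈ Hminus) (k : ℕ) : degLE ((Q ^ k) ψ - zH ^ k) (k - 1) := by
  induction k with
  | zero => simpa [mem_Hminus_iff_degLE] using hψ
  | succ k ih =>
    rw [pow_succ', Module.End.mul_apply, Nat.cast_succ, add_sub_cancel_right]
    exact hQ.degLE_apply_sub_zH_pow_succ ih

section BigCell

variable {v : ℕ → H} (hv : ∀ k : ℕ, degLE (v k - zH ^ k) (k - 1))
include hv

lemma zc_finsupp_sum_max' (c : ℕ →₀ ℂ) (hc : c.support.Nonempty) :
    zc (c.sum fun k t => t • v k) (c.support.max' hc) = c (c.support.max' hc) := by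
  set m := c.support.max' hc
  rw [Finsupp.sum, zc_sum, Finset.sum_eq_single_of_mem m (c.support.max'_mem hc),
    zc_smul, zc_eq_one_of_degLE_sub_zH_pow (hv m), mul_one]
  intro k hk hkm
  have hlt : k < m := (c.support.le_max' k hk).lt_of_ne hkm
  rw [zc_smul, degLE_of_degLE_sub_zH_pow (hv k) m (by exact_mod_cast hlt), mul_zero]

lemma eq_zero_of_piPlus_finsupp_sum_eq_zero (c : ℕ →₀ ℂ)
    (h : piPlus (c.sum fun k t => t • v k) = 0) : c = 0 := by
  by_contra hc
  have hne := Finsupp.support_nonempty_iff.mpr hc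
  have htop := congrArg (zc · (c.support.max' hne)) h
  simp only [zc_piPlus, if_neg (Int.natCast_nonneg _).not_gt, zc_finsupp_sum_max' hv,
    zc_zero] at htop
  exact Finsupp.mem_support_iff.mp (c.support.max'_mem hne) htop

lemma injOn_piPlus_span : Set.InjOn piPlus (Submodule.span ℂ (Set.range v)) := by
  refine LinearMap.disjoint_ker_iff_injOn.mp (LinearMap.disjoint_ker.mpr fun w hw hw0 => ?_)
  obtain ⟨c, rfl⟩ := Finsupp.mem_span_range_iff_exists_finsupp.mp hw
  rw [eq_zero_of_piPlus_finsupp_sum_eq_zero hv c hw0, Finsupp.sum_zero_index]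

lemma exists_mem_span_piPlus_eq (n : ℕ) {p : H} (hp : p ∈ Hplus) (hdeg : degLE p (n - 1)) :
    ∃ w ∈ Submodule.span ℂ (Set.range v), piPlus w = p := by
  induction n generalizing p with
  | zero =>
    refine ⟨0, Submodule.zero_mem _, ?_⟩
    rw [map_zero, eq_zero_of_mem_Hplus_of_degLE hp (by simpa using hdeg)]
  | succ n ih =>
    set c := zc p n
    have hlower : degLE (p - c • piPlus (v n)) (n - 1) := by
      intro k hk
      rw [zc_sub, zc_smul, zc_piPlus, if_neg (by omega)]
      rcases (Int.sub_one_lt_iff.mp hk).lt_or_eq with hlt | rfl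
      · rw [hdeg k (by push_cast; omega), degLE_of_degLE_sub_zH_pow (hv n) k hlt, mul_zero,
          sub_zero]
      · rw [zc_eq_one_of_degLE_sub_zH_pow (hv n), mul_one, sub_self]
    obtain ⟨w, hw, hpw⟩ :=
      ih (Hplus.sub_mem hp (Hplus.smul_mem c (piPlus_mem_Hplus _))) hlower
    refine ⟨w + c • v n, Submodule.add_mem _ hw
      (Submodule.smul_mem _ c (Submodule.subset_span ⟨n, rfl⟩)), ?_⟩
    rw [map_add, map_smul, hpw, sub_add_cancel]

lemma bigCell_span : BigCell (Submodule.span ℂ (Set.range v)) := by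
  refine ⟨fun f _ => piPlus_mem_Hplus f, injOn_piPlus_span hv, fun p hp => ?_⟩
  exact exists_mem_span_piPlus_eq hv (-p.order + 1).toNat hp
    ((degLE_neg_order p).mono (by omega))

end BigCell

section Stability

variable {R M : Type*} [Ring R] [AddCommGroup M] [Module R M]

lemma span_range_pow_apply_le_comap (Q : Module.End R M) (ψ : M) :
    Submodule.span R (Set.range fun k : ℕ => (Q ^ k) ψ) ≤
      (Submodule.span R (Set.range fun k : ℕ => (Q ^ k) ψ)).comap Q := by
  rw [Submodule.span_le]
  rintro _ ⟨k, rfl⟩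
  rw [SetLike.mem_coe, Submodule.mem_comap, ← Module.End.mul_apply, ← pow_succ']
  exact Submodule.subset_span ⟨k + 1, rfl⟩

lemma span_range_pow_apply_le_comap_of_commutator {P Q : Module.End R M}
    (hPQ : P ∘ₗ Q - Q ∘ₗ P = LinearMap.id) {ψ : M} (hψ : P ψ = 0) :
    Submodule.span R (Set.range fun k : ℕ => (Q ^ k) ψ) ≤
      (Submodule.span R (Set.range fun k : ℕ => (Q ^ k) ψ)).comap P := by
  set W := Submodule.span R (Set.range fun k : ℕ => (Q ^ k) ψ)
  have hcomm (f : M) : P (Q f) = Q (P f) + f := by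
    simpa [sub_eq_iff_eq_add'] using LinearMap.congr_fun hPQ f
  rw [Submodule.span_le]
  rintro _ ⟨k, rfl⟩
  induction k with
  | zero => simp [hψ]
  | succ k ih =>
    change P ((Q ^ (k + 1)) ψ) ∈ W
    rw [pow_succ', Module.End.mul_apply, hcomm]
    exact W.add_mem (span_range_pow_apply_le_comap Q ψ ih) (Submodule.subset_span ⟨k, rfl⟩)

end Stability

/-- For `(P,Q) ∈ Gr_𝒟` and `Ψ` the monic solution of `P·Ψ = 0`, the vectors
`Q^k·Ψ` have leading term `z^k`, their span lies in the big cell, and it is stabilized by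
`P` and `Q`. -/
theorem distinguished_basis_span (P Q : H →ₗ[ℂ] H) (hPQ : GrD P Q)
    (Psi : H) (hPsi1 : Psi - 1 ∈ Hminus) (hPsi2 : P Psi = 0) :
    (∀ k : ℕ, degLE ((Q ^ k) Psi - zH ^ k) ((k : ℤ) - 1)) ∧
    BigCell (Submodule.span ℂ (Set.range fun k : ℕ => (Q ^ k) Psi)) ∧
    Stab P (Submodule.span ℂ (Set.range fun k : ℕ => (Q ^ k) Psi)) ∧
    Stab Q (Submodule.span ℂ (Set.range fun k : ℕ => (Q ^ k) Psi)) := by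
  obtain ⟨-, ⟨b, hQ⟩, hcomm⟩ := hPQ
  have hlead := hQ.degLE_pow_apply_sub_zH_pow hPsi1
  exact ⟨hlead, bigCell_span hlead,
    fun _ hf => span_range_pow_apply_le_comap_of_commutator hcomm hPsi2 hf,
    fun _ hf => span_range_pow_apply_le_comap Q Psi hf⟩
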